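/- arXiv:2011.06568 — 2 statements merged into one kernel-verified Lean document; each statement's English description precedes it below -/
import Mathlib

section
/- Let ε ∈ (0,1) be irrational. A point p ∈ Σ⁵ is a periodic point of the Katok flow (i.e. there exists T > 0 with φ_T(p) = p) if and only if p ∈ C₁ ∪ C₂ ∪ C₃ ∪ C₄. -/
noncomputable section

open Complex

/-- `ℂ⁴` with the Hermitian norm `‖z‖² = Σⱼ |zⱼ|²`. -/
abbrev C4 := EuclideanSpace ℂ (Fin 4)

def toC4 (v : Fin 4 → ℂ) : C4 := (WithLp.equiv 2 (Fin 4 → ℂ)).symm v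

/-- The Katok flow `φ_t(w) = (e^{2πit} w₀, e^{2πit} w₁, e^{2πi(1+ε)t} w₂, e^{2πi(1−ε)t} w₃)`. -/
def katok (ε : ℝ) (t : ℝ) (w : C4) : C4 := toC4
  ![Complex.exp (2 * (Real.pi : ℂ) * Complex.I * (t : ℂ)) * w 0,
    Complex.exp (2 * (Real.pi : ℂ) * Complex.I * (t : ℂ)) * w 1,
    Complex.exp (2 * (Real.pi : ℂ) * Complex.I * ((1 + ε : ℝ) : ℂ) * (t : ℂ)) * w 2,
    Complex.exp (2 * (Real.pi : ℂ) * Complex.I * ((1 - ε : ℝ) : ℂ) * (t : ℂ)) * w 3]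

/-- The Brieskorn quadric link `Σ⁵` in the unitary coordinates of the paper. -/
def Sigma5 : Set C4 := {w | w 0 ^ 2 + w 1 ^ 2 - 2 * Complex.I * w 2 * w 3 = 0 ∧ ‖w‖ = 1}

/-- `C₁ = {(w, i w, 0, 0) : |w| = √2/2}`. -/
def circ1 : Set C4 :=
  {p | ∃ w : ℂ, ‖w‖ = Real.sqrt 2 / 2 ∧ p = toC4 ![w, Complex.I * w, 0, 0]}

/-- `C₂ = {(w, −i w, 0, 0) : |w| = √2/2}`. -/
def circ2 : Set C4 :=
  {p | ∃ w : ℂ, ‖w‖ = Real.sqrt 2 / 2 ∧ p = toC4 ![w, -(Complex.I * w), 0, 0]}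

/-- `C₃ = {(0, 0, w, 0) : |w| = 1}`. -/
def circ3 : Set C4 :=
  {p | ∃ w : ℂ, ‖w‖ = 1 ∧ p = toC4 ![0, 0, w, 0]}

/-- `C₄ = {(0, 0, 0, w) : |w| = 1}`. -/
def circ4 : Set C4 :=
  {p | ∃ w : ℂ, ‖w‖ = 1 ∧ p = toC4 ![0, 0, 0, w]}

/-!
Each coordinate of `φ_t` is a rotation, with frequencies `1, 1, 1 + ε, 1 - ε`, so `φ_T p = p`
exactly when `T` times the frequency of every nonzero coordinate of `p` is an integer. For
irrational `ε` any two distinct frequencies among these have irrational ratio, so they are never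
both commensurable with one `T ≠ 0`: the nonzero coordinates of a periodic point lie in `{0, 1}`,
`{2}` or `{3}`. On `Σ⁵` the first case forces `w₁ = ± i w₀`, giving `C₁` and `C₂`, and the
other two give `C₃` and `C₄`. Conversely each circle consists of points with a single frequency.
-/
open scoped Real

theorem exp_two_pi_I_mul_eq_one_iff (x : ℝ) :
    exp (2 * π * I * x) = 1 ↔ ∃ n : ℤ, x = n := by
  have h2πI : 2 * (π : ℂ) * I ≠ 0 := by simp [Real.pi_ne_zero, I_ne_zero]
  simp only [exp_eq_one_iff, mul_comm _ (2 * (π : ℂ) * I), mul_right_inj' h2πI]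
  exact_mod_cast Iff.rfl

theorem exists_pos_mul_eq_int {a : ℝ} (ha : a ≠ 0) : ∃ T > 0, ∃ n : ℤ, a * T = n := by
  rcases ha.lt_or_gt with ha | ha
  · exact ⟨-a⁻¹, by simpa using ha, -1, by field_simp; simp⟩
  · exact ⟨a⁻¹, inv_pos.2 ha, 1, by field_simp; simp⟩

theorem eq_zero_of_mul_eq_int_of_irrational_div {a b T : ℝ} (h : Irrational (a / b)) {m n : ℤ}
    (ha : a * T = m) (hb : b * T = n) : T = 0 := by
  by_contra hT
  refine h.ne_rat (m / n) ?_
  rw [← mul_div_mul_right a b hT, ha, hb]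
  push_cast; rfl

theorem Irrational.one_add_div_one_sub {x : ℝ} (h : Irrational x) :
    Irrational ((1 + x) / (1 - x)) := by
  have hx : 1 - x ≠ 0 := sub_ne_zero.2 h.ne_one.symm
  have : (1 + x) / (1 - x) = 2 / (1 - x) - 1 := by field_simp; ring
  rw [this]
  simpa using ((h.intCast_sub 1).intCast_div (m := 2) two_ne_zero).sub_intCast 1

def katokFreq (ε : ℝ) : Fin 4 → ℝ := ![1, 1, 1 + ε, 1 - ε]

theorem katok_apply (ε t : ℝ) (w : C4) (j : Fin 4) :
    katok ε t w j = exp (2 * π * I * (katokFreq ε j * t : ℝ)) * w j := by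
  fin_cases j <;> simp [katok, toC4, katokFreq, mul_assoc]

theorem norm_sq_C4 (p : C4) : ‖p‖ ^ 2 = ‖p 0‖ ^ 2 + ‖p 1‖ ^ 2 + ‖p 2‖ ^ 2 + ‖p 3‖ ^ 2 := by
  simp [EuclideanSpace.norm_sq_eq, Fin.sum_univ_four]

theorem katok_eq_self_iff {ε T : ℝ} {p : C4} :
    katok ε T p = p ↔ ∀ j, p j ≠ 0 → ∃ n : ℤ, katokFreq ε j * T = n := by
  simp only [PiLp.ext_iff, katok_apply, mul_left_eq_self₀, ← exp_two_pi_I_mul_eq_one_iff]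
  exact forall_congr' fun j => or_iff_not_imp_right

theorem exists_katok_period_of_katokFreq_eq {ε a : ℝ} (ha : a ≠ 0) {p : C4}
    (h : ∀ j, p j ≠ 0 → katokFreq ε j = a) : ∃ T, 0 < T ∧ katok ε T p = p := by
  obtain ⟨T, hT, n, hn⟩ := exists_pos_mul_eq_int ha
  exact ⟨T, hT, katok_eq_self_iff.2 fun j hj => ⟨n, by rw [h j hj, hn]⟩⟩

theorem mem_circ1_union_circ2_of_mem_Sigma5 {p : C4} (hp : p ∈ Sigma5) (h2 : p 2 = 0)
    (h3 : p 3 = 0) : p ∈ circ1 ∪ circ2 := by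
  obtain ⟨hquad, hnorm⟩ := hp
  have hfactor : (p 1 - I * p 0) * (p 1 + I * p 0) = 0 := by
    linear_combination hquad - p 0 ^ 2 * I_sq + 2 * I * p 3 * h2
  have hnorm_sq : ‖p 0‖ ^ 2 + ‖p 1‖ ^ 2 = 1 := by
    simpa [h2, h3, hnorm] using (norm_sq_C4 p).symm
  have hnorm0 (h1 : ‖p 1‖ = ‖p 0‖) : ‖p 0‖ = √2 / 2 := by
    refine (pow_left_inj₀ (norm_nonneg _) (by positivity) two_ne_zero).1 ?_
    rw [h1] at hnorm_sq
    rw [div_pow, Real.sq_sqrt zero_le_two]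
    linarith
  rcases mul_eq_zero.1 hfactor with h1 | h1
  · have h1 : p 1 = I * p 0 := sub_eq_zero.1 h1
    refine Or.inl ⟨p 0, hnorm0 (by simp [h1]), ?_⟩
    ext j; fin_cases j <;> simp [toC4, h1, h2, h3]
  · have h1 : p 1 = -(I * p 0) := eq_neg_of_add_eq_zero_left h1
    refine Or.inr ⟨p 0, hnorm0 (by simp [h1]), ?_⟩
    ext j; fin_cases j <;> simp [toC4, h1, h2, h3]

theorem mem_circ3_of_norm_eq_one {p : C4} (hp : ‖p‖ = 1) (h0 : p 0 = 0) (h1 : p 1 = 0)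
    (h3 : p 3 = 0) : p ∈ circ3 := by
  refine ⟨p 2, ?_, ?_⟩
  · refine (pow_eq_one_iff_of_nonneg (norm_nonneg _) two_ne_zero).1 ?_
    simpa [h0, h1, h3, hp] using (norm_sq_C4 p).symm
  · ext j; fin_cases j <;> simp [toC4, h0, h1, h3]

theorem mem_circ4_of_norm_eq_one {p : C4} (hp : ‖p‖ = 1) (h0 : p 0 = 0) (h1 : p 1 = 0)
    (h2 : p 2 = 0) : p ∈ circ4 := by
  refine ⟨p 3, ?_, ?_⟩
  · refine (pow_eq_one_iff_of_nonneg (norm_nonneg _) two_ne_zero).1 ?_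
    simpa [h0, h1, h2, hp] using (norm_sq_C4 p).symm
  · ext j; fin_cases j <;> simp [toC4, h0, h1, h2]

theorem katok_periodic_points_general (ε : ℝ) (hirr : Irrational ε) :
    ∀ p ∈ Sigma5, (∃ T : ℝ, 0 < T ∧ katok ε T p = p) ↔ p ∈ circ1 ∪ circ2 ∪ circ3 ∪ circ4 := by
  intro p hp
  have hplus : Irrational (1 + ε) := by simpa using hirr.intCast_add 1
  have hminus : Irrational (1 - ε) := by simpa using hirr.intCast_sub 1
  constructor
  · rintro ⟨T, hT, hfix⟩
    have hper := katok_eq_self_iff.1 hfix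
    have incommensurable (i j : Fin 4) (hij : Irrational (katokFreq ε i / katokFreq ε j)) :
        p i = 0 ∨ p j = 0 := by
      by_contra! h
      obtain ⟨m, hm⟩ := hper i h.1
      obtain ⟨n, hn⟩ := hper j h.2
      exact hT.ne' (eq_zero_of_mul_eq_int_of_irrational_div hij hm hn)
    by_cases h2 : p 2 = 0 <;> by_cases h3 : p 3 = 0
    · exact .inl (.inl (mem_circ1_union_circ2_of_mem_Sigma5 hp h2 h3))
    · have h0 := (incommensurable 3 0 (by simpa [katokFreq])).resolve_left h3
      have h1 := (incommensurable 3 1 (by simpa [katokFreq])).resolve_left h3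
      exact .inr (mem_circ4_of_norm_eq_one hp.2 h0 h1 h2)
    · have h0 := (incommensurable 2 0 (by simpa [katokFreq])).resolve_left h2
      have h1 := (incommensurable 2 1 (by simpa [katokFreq])).resolve_left h2
      exact .inl (.inr (mem_circ3_of_norm_eq_one hp.2 h0 h1 h3))
    · exact ((incommensurable 2 3 hirr.one_add_div_one_sub).elim h2 h3).elim
  · rintro (((⟨w, -, rfl⟩ | ⟨w, -, rfl⟩) | ⟨w, -, rfl⟩) | ⟨w, -, rfl⟩) <;>
      [apply exists_katok_period_of_katokFreq_eq one_ne_zero;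
        apply exists_katok_period_of_katokFreq_eq one_ne_zero;
        apply exists_katok_period_of_katokFreq_eq hplus.ne_zero;
        apply exists_katok_period_of_katokFreq_eq hminus.ne_zero] <;>
      intro j hj <;> fin_cases j <;> simp_all [katokFreq, toC4]

/-- For `ε ∈ (0,1)` irrational, a point of `Σ⁵` is periodic for the Katok flow
iff it lies on one of the four circles `C₁ ∪ C₂ ∪ C₃ ∪ C₄`. -/
theorem katok_periodic_points (ε : ℝ) (hε : ε ∈ Set.Ioo (0 : ℝ) 1) (hirr : Irrational ε) :
    ∀ p ∈ Sigma5, (∃ T : ℝ, 0 < T ∧ katok ε T p = p) ↔ p ∈ circ1 ∪ circ2 ∪ circ3 ∪ circ4 :=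
  katok_periodic_points_general ε hirr
end
end

section
/- Let ε ∈ (0,1). The fixed point set of the time-one map of the Katok flow on Σ⁵ is exactly C₁ ∪ C₂: {p ∈ Σ⁵ : φ₁(p) = p} = C₁ ∪ C₂. In particular φ₁ has no fixed points in the binding Σ⁵ ∩ {w₀ = 0}, and for every θ ∈ ℝ the page {p ∈ Σ⁵ : p₀ = r e^{iθ} for some r > 0} contains exactly two fixed points of φ₁, namely ((√2/2) e^{iθ}, ± i (√2/2) e^{iθ}, 0, 0). -/
noncomputable section

open Complex

/-- The fixed point `((√2/2) e^{iθ}, i (√2/2) e^{iθ}, 0, 0)` on the `θ`-page. -/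
def fixPtPlus (θ : ℝ) : C4 := toC4
  ![((Real.sqrt 2 / 2 : ℝ) : ℂ) * Complex.exp ((θ : ℂ) * Complex.I),
    Complex.I * (((Real.sqrt 2 / 2 : ℝ) : ℂ) * Complex.exp ((θ : ℂ) * Complex.I)), 0, 0]

/-- The fixed point `((√2/2) e^{iθ}, −i (√2/2) e^{iθ}, 0, 0)` on the `θ`-page. -/
def fixPtMinus (θ : ℝ) : C4 := toC4
  ![((Real.sqrt 2 / 2 : ℝ) : ℂ) * Complex.exp ((θ : ℂ) * Complex.I),
    -(Complex.I * (((Real.sqrt 2 / 2 : ℝ) : ℂ) * Complex.exp ((θ : ℂ) * Complex.I))), 0, 0]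

/-! At time one the coordinates `w₀, w₁` come back to themselves while `w₂, w₃` are rotated by
`e^{±2πiε} ≠ 1`, so the fixed points of `φ₁` are the points with `w₂ = w₃ = 0`. On `Σ⁵` these
satisfy `w₀² + w₁² = (w₁ - i w₀)(w₁ + i w₀) = 0` and `|w₀|² + |w₁|² = 1`, i.e. `w₁ = ± i w₀` with
`|w₀| = √2/2`: this is `C₁ ∪ C₂`. Hence `w₀ ≠ 0` at every fixed point, and on the `θ`-page
`w₀ = r e^{iθ}` the modulus forces `r = √2/2`. -/

namespace Complex

open Real

lemma exp_two_pi_I_mul_ofReal_eq_one_iff (c : ℝ) :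
    exp (2 * π * I * c) = 1 ↔ ∃ n : ℤ, c = n := by
  simp only [exp_eq_one_iff, mul_comm _ (2 * π * I), mul_right_inj' two_pi_I_ne_zero]
  exact exists_congr fun n => by exact_mod_cast Iff.rfl

lemma sq_add_sq_eq_zero_iff (a b : ℂ) : a ^ 2 + b ^ 2 = 0 ↔ b = I * a ∨ b = -(I * a) := by
  have factor : a ^ 2 + b ^ 2 = (b - I * a) * (b + I * a) := by linear_combination a ^ 2 * I_sq
  rw [factor, mul_eq_zero, sub_eq_zero, add_eq_zero_iff_eq_neg]

lemma norm_ofReal_mul_exp_ofReal_mul_I {r : ℝ} (hr : 0 ≤ r) (θ : ℝ) :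
    ‖(r : ℂ) * exp (θ * I)‖ = r := by
  rw [norm_mul, norm_exp_ofReal_mul_I, mul_one, norm_real, Real.norm_of_nonneg hr]

end Complex

open Real

lemma toC4_apply (v : Fin 4 → ℂ) (i : Fin 4) : toC4 v i = v i := rfl

lemma toC4_eta (p : C4) : toC4 ![p 0, p 1, p 2, p 3] = p := by
  ext i; fin_cases i <;> rfl

lemma norm_toC4_sq (v : Fin 4 → ℂ) :
    ‖toC4 v‖ ^ 2 = ‖v 0‖ ^ 2 + ‖v 1‖ ^ 2 + ‖v 2‖ ^ 2 + ‖v 3‖ ^ 2 := by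
  rw [EuclideanSpace.norm_sq_eq, Fin.sum_univ_four]; rfl

lemma katok_one_eq_self_iff {ε : ℝ} (hε : ∀ n : ℤ, ε ≠ n) (p : C4) :
    katok ε 1 p = p ↔ p 2 = 0 ∧ p 3 = 0 := by
  have factor_ne_one (c : ℝ) (hc : ∀ n : ℤ, c ≠ n) : cexp (2 * π * I * c) ≠ 1 := fun h =>
    let ⟨n, hn⟩ := (Complex.exp_two_pi_I_mul_ofReal_eq_one_iff c).1 h; hc n hn
  have h₂ : cexp (2 * π * I * (1 + ε)) ≠ 1 := by
    exact_mod_cast factor_ne_one (1 + ε) fun n hn => hε (n - 1) (by push_cast; linarith)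
  have h₃ : cexp (2 * π * I * (1 - ε)) ≠ 1 := by
    exact_mod_cast factor_ne_one (1 - ε) fun n hn => hε (1 - n) (by push_cast; linarith)
  simp only [katok, toC4_apply, PiLp.ext_iff, Fin.forall_fin_succ]
  simp [mul_left_eq_self₀, h₂, h₃, Complex.exp_two_pi_mul_I]

lemma toC4_mem_Sigma5_iff {s : ℂ} (hs : s ^ 2 = -1) (w : ℂ) :
    toC4 ![w, s * w, 0, 0] ∈ Sigma5 ↔ ‖w‖ = √2 / 2 := by
  have norm_s : ‖s‖ = 1 := by
    rw [← pow_eq_one_iff_of_nonneg (norm_nonneg s) two_ne_zero, ← norm_pow, hs, norm_neg, norm_one]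
  have quadric : w ^ 2 + (s * w) ^ 2 - 2 * I * 0 * 0 = 0 := by linear_combination w ^ 2 * hs
  have norm_sq : ‖toC4 ![w, s * w, 0, 0]‖ ^ 2 = 2 * ‖w‖ ^ 2 := by
    rw [norm_toC4_sq]
    simp only [Matrix.cons_val_zero, Matrix.cons_val_one, Matrix.cons_val, norm_mul, norm_s,
      norm_zero]
    ring
  have half_sq : (√2 / 2) ^ 2 = (1 / 2 : ℝ) := by
    rw [div_pow, Real.sq_sqrt zero_le_two]; norm_num
  refine (and_iff_right quadric).trans ?_
  rw [← pow_eq_one_iff_of_nonneg (norm_nonneg _) two_ne_zero, norm_sq,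
    ← pow_left_inj₀ (norm_nonneg w) (by positivity) two_ne_zero, half_sq]
  constructor <;> intro h <;> linarith

lemma mem_Sigma5_and_eq_zero_iff (p : C4) :
    (p ∈ Sigma5 ∧ p 2 = 0 ∧ p 3 = 0) ↔ p ∈ circ1 ∪ circ2 := by
  have neg_I_sq : (-I) ^ 2 = -1 := by rw [neg_sq, I_sq]
  constructor
  · rintro ⟨hp, h₂, h₃⟩
    rw [← toC4_eta p, h₂, h₃] at hp ⊢
    have quadric : p 0 ^ 2 + p 1 ^ 2 = 0 := by simpa [Sigma5, toC4_apply] using hp.1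
    rcases (Complex.sq_add_sq_eq_zero_iff (p 0) (p 1)).1 quadric with h | h
    · rw [h] at hp ⊢
      exact Or.inl ⟨p 0, (toC4_mem_Sigma5_iff I_sq _).1 hp, rfl⟩
    · rw [h, ← neg_mul] at hp ⊢
      exact Or.inr ⟨p 0, (toC4_mem_Sigma5_iff neg_I_sq _).1 hp, by rw [neg_mul]⟩
  · rintro (⟨w, hw, rfl⟩ | ⟨w, hw, rfl⟩)
    · exact ⟨(toC4_mem_Sigma5_iff I_sq w).2 hw, rfl, rfl⟩
    · rw [← neg_mul]
      exact ⟨(toC4_mem_Sigma5_iff neg_I_sq w).2 hw, rfl, rfl⟩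

lemma norm_apply_zero_of_mem_circ1_union_circ2 {p : C4} (hp : p ∈ circ1 ∪ circ2) :
    ‖p 0‖ = √2 / 2 := by
  rcases hp with ⟨w, hw, rfl⟩ | ⟨w, hw, rfl⟩ <;> exact hw

lemma circ1_union_circ2_inter_page (θ : ℝ) :
    {p ∈ circ1 ∪ circ2 | ∃ r : ℝ, 0 < r ∧ p 0 = (r : ℂ) * cexp (θ * I)} =
      {fixPtPlus θ, fixPtMinus θ} := by
  have hpos : (0 : ℝ) < √2 / 2 := by positivity
  ext p
  simp only [Set.mem_sep_iff, Set.mem_insert_iff, Set.mem_singleton_iff]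
  constructor
  · rintro ⟨⟨w, hw, rfl⟩ | ⟨w, hw, rfl⟩, r, hr, hw_eq : w = _⟩ <;>
    · obtain rfl : r = √2 / 2 := by
        rw [← hw, hw_eq, Complex.norm_ofReal_mul_exp_ofReal_mul_I hr.le]
      subst hw_eq
      simp [fixPtPlus, fixPtMinus]
  · have hnorm := Complex.norm_ofReal_mul_exp_ofReal_mul_I hpos.le θ
    rintro (rfl | rfl)
    · exact ⟨Or.inl ⟨_, hnorm, rfl⟩, _, hpos, rfl⟩
    · exact ⟨Or.inr ⟨_, hnorm, rfl⟩, _, hpos, rfl⟩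

/-- For `ε ∈ (0,1)`, the fixed point set of the time-one map of the Katok flow on `Σ⁵` is
exactly `C₁ ∪ C₂`; in particular there are no fixed points in the binding `{w₀ = 0} ∩ Σ⁵`,
and each page `{arg w₀ = θ}` contains exactly the two fixed points
`((√2/2) e^{iθ}, ± i (√2/2) e^{iθ}, 0, 0)`. -/
theorem katok_time_one_fixed_points (ε : ℝ) (hε : ε ∈ Set.Ioo (0 : ℝ) 1) :
    ({p ∈ Sigma5 | katok ε 1 p = p} = circ1 ∪ circ2) ∧
    (∀ p ∈ Sigma5, p 0 = 0 → katok ε 1 p ≠ p) ∧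
    (∀ θ : ℝ,
      {p ∈ Sigma5 | (∃ r : ℝ, 0 < r ∧ p 0 = (r : ℂ) * Complex.exp ((θ : ℂ) * Complex.I)) ∧
        katok ε 1 p = p} = {fixPtPlus θ, fixPtMinus θ}) := by
  have not_int : ∀ n : ℤ, ε ≠ n := by
    rintro n rfl
    have : (0 : ℤ) < n := by exact_mod_cast hε.1
    have : n < 1 := by exact_mod_cast hε.2
    omega
  have fixed : {p ∈ Sigma5 | katok ε 1 p = p} = circ1 ∪ circ2 := by
    ext p
    rw [← mem_Sigma5_and_eq_zero_iff, ← katok_one_eq_self_iff not_int]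
    rfl
  refine ⟨fixed, fun p hp h₀ hfix => ?_, fun θ => ?_⟩
  · have norm_p₀ := norm_apply_zero_of_mem_circ1_union_circ2 (p := p) (fixed ▸ ⟨hp, hfix⟩)
    rw [h₀, norm_zero] at norm_p₀
    exact absurd norm_p₀.symm (by positivity)
  · rw [← circ1_union_circ2_inter_page θ, ← fixed]
    ext p
    simp only [Set.mem_ofPred_eq]
    tauto
end
end
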